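/- Let y > 1, Y = y e^{-y}, and let x ∈ (0,1) solve x - ln x = y - ln y. Define c₁ = (e-2)/(e-1), d₁ = e - 1 - c₁e, and z₁(y) = (1 - d₁Y - √((1 - d₁Y)² - 4c₁Y))/(2c₁Y). Then z₁(y)·Y < x. -/

import Mathlib

/-!
Since `x - log x = y - log y`, also `Y = x e^{-x}`, so `z₁ Y` is the smaller root of
`c₁ z² - (1 - d₁ Y) z + Y`, and it suffices to show that this quadratic is negative at `z = x`.
Dividing by `x e^{-x}`, this is the inequality `1 + d₁ x < e^x (1 - c₁ x)` on `(0, 1)`.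
The constants are chosen so that `φ t = t + log (1 - c₁ t) - log (1 + d₁ t)` vanishes at `0`
and `1` and `φ' 0 = 0`; then `φ' t = t (d₁ - c₁ - c₁ d₁ t) / ((1 - c₁ t)(1 + d₁ t))` changes sign
only once in `(0, 1)`, so `φ` rises and then falls, and is positive in between.
-/

open Real Set

lemma lt_of_strictMonoOn_of_strictAntiOn {α β : Type*} [LinearOrder α] [Preorder β]
    {f : α → β} {a m b x : α} {r : β} (hinc : StrictMonoOn f (Icc a m))
    (hdec : StrictAntiOn f (Icc m b)) (ha : r ≤ f a) (hb : r ≤ f b) (hx : x ∈ Ioo a b) :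
    r < f x := by
  rcases le_total x m with hxm | hmx
  · exact ha.trans_lt <| hinc ⟨le_rfl, hx.1.le.trans hxm⟩ ⟨hx.1.le, hxm⟩ hx.1
  · exact hb.trans_lt <| hdec ⟨hmx, hx.2.le⟩ ⟨hmx.trans hx.2.le, le_rfl⟩ hx.2

lemma sub_sqrt_div_lt_of_quadratic_neg {a b k x : ℝ} (ha : 0 < a) (h : a * x ^ 2 - b * x + k < 0) :
    (b - √(b ^ 2 - 4 * a * k)) / (2 * a) < x := by
  have hsq : (2 * a * x - b) ^ 2 < b ^ 2 - 4 * a * k := by nlinarith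
  have habs : |2 * a * x - b| < √(b ^ 2 - 4 * a * k) := by
    rw [← sqrt_sq_eq_abs]
    exact sqrt_lt_sqrt (sq_nonneg _) hsq
  rw [div_lt_iff₀ (by positivity)]
  linarith [(abs_lt.mp habs).1]

lemma mul_exp_neg_eq_of_sub_log_eq {x y : ℝ} (hx : 0 < x) (hy : 0 < y)
    (h : x - log x = y - log y) : x * exp (-x) = y * exp (-y) := by
  have hexp : ∀ t, 0 < t → t * exp (-t) = exp (-(t - log t)) := fun t ht => by
    rw [neg_sub, exp_sub, exp_log ht, exp_neg, div_eq_mul_inv]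
  rw [hexp x hx, hexp y hy, h]

noncomputable def logGap (c d t : ℝ) : ℝ := t + log (1 - c * t) - log (1 + d * t)

section LogGap

variable {c d : ℝ}

lemma hasDerivAt_logGap {t : ℝ} (hsum : c + d = 1) (hct : 0 < 1 - c * t) (hdt : 0 < 1 + d * t) :
    HasDerivAt (logGap c d) (t * (d - c - c * d * t) / ((1 - c * t) * (1 + d * t))) t := by
  have hc : HasDerivAt (fun s => 1 - c * s) (-c) t := by
    simpa using ((hasDerivAt_id t).const_mul c).const_sub 1
  have hd : HasDerivAt (fun s => 1 + d * s) d t := by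
    simpa using ((hasDerivAt_id t).const_mul d).const_add 1
  refine (((hasDerivAt_id' t).add (hc.log hct.ne')).sub (hd.log hdt.ne')).congr_deriv ?_
  have hA := hct.ne'
  have hB : 1 + t * d ≠ 0 := by rw [mul_comm]; exact hdt.ne'
  rw [mul_comm d t]
  field_simp
  linear_combination -hsum

lemma one_sub_mul_pos_and_one_add_mul_pos (hc : 0 < c) (hcd : c < d) (hsum : c + d = 1)
    {t : ℝ} (ht : t ∈ Icc 0 1) : 0 < 1 - c * t ∧ 0 < 1 + d * t :=
  ⟨by nlinarith [ht.2], by nlinarith [ht.1]⟩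

lemma continuousOn_logGap (hc : 0 < c) (hcd : c < d) (hsum : c + d = 1) :
    ContinuousOn (logGap c d) (Icc 0 1) :=
  HasDerivAt.continuousOn fun _ ht =>
    let ⟨hct, hdt⟩ := one_sub_mul_pos_and_one_add_mul_pos hc hcd hsum ht
    hasDerivAt_logGap hsum hct hdt

lemma strictMonoOn_logGap (hc : 0 < c) (hcd : c < d) (hsum : c + d = 1)
    (hturn : d - c < c * d) : StrictMonoOn (logGap c d) (Icc 0 ((d - c) / (c * d))) := by
  have hcd₀ : 0 < c * d := by nlinarith
  have hm : (d - c) / (c * d) < 1 := (div_lt_one hcd₀).mpr hturn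
  refine strictMonoOn_of_hasDerivWithinAt_pos (convex_Icc _ _)
    (f' := fun s => s * (d - c - c * d * s) / ((1 - c * s) * (1 + d * s)))
    ((continuousOn_logGap hc hcd hsum).mono (Icc_subset_Icc le_rfl hm.le))
    (fun s hs => ?_) (fun s hs => ?_) <;> rw [interior_Icc] at hs <;>
    obtain ⟨hct, hdt⟩ := one_sub_mul_pos_and_one_add_mul_pos hc hcd hsum
      ⟨hs.1.le, hs.2.le.trans hm.le⟩
  · exact (hasDerivAt_logGap hsum hct hdt).hasDerivWithinAt
  · have : c * d * s < d - c := (lt_div_iff₀' hcd₀).mp hs.2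
    exact div_pos (mul_pos hs.1 (by linarith)) (mul_pos hct hdt)

lemma strictAntiOn_logGap (hc : 0 < c) (hcd : c < d) (hsum : c + d = 1) :
    StrictAntiOn (logGap c d) (Icc ((d - c) / (c * d)) 1) := by
  have hcd₀ : 0 < c * d := by nlinarith
  have hm : 0 < (d - c) / (c * d) := div_pos (by linarith) hcd₀
  refine strictAntiOn_of_hasDerivWithinAt_neg (convex_Icc _ _)
    (f' := fun s => s * (d - c - c * d * s) / ((1 - c * s) * (1 + d * s)))
    ((continuousOn_logGap hc hcd hsum).mono (Icc_subset_Icc hm.le le_rfl))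
    (fun s hs => ?_) (fun s hs => ?_) <;> rw [interior_Icc] at hs <;>
    obtain ⟨hct, hdt⟩ := one_sub_mul_pos_and_one_add_mul_pos hc hcd hsum
      ⟨hm.le.trans hs.1.le, hs.2.le⟩
  · exact (hasDerivAt_logGap hsum hct hdt).hasDerivWithinAt
  · have : d - c < c * d * s := (div_lt_iff₀' hcd₀).mp hs.1
    exact div_neg_of_neg_of_pos (mul_neg_of_pos_of_neg (hm.trans hs.1) (by linarith))
      (mul_pos hct hdt)

lemma logGap_pos (hc : 0 < c) (hcd : c < d) (hsum : c + d = 1) (hturn : d - c < c * d)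
    (hend : 1 + d = exp 1 * (1 - c)) {t : ℝ} (ht : t ∈ Ioo 0 1) : 0 < logGap c d t := by
  have hzero : logGap c d 0 = 0 := by simp [logGap]
  have hone : logGap c d 1 = 0 := by
    have h1c : 0 < 1 - c := by linarith
    rw [logGap, mul_one, mul_one, hend, log_mul (exp_pos 1).ne' h1c.ne', log_exp]
    ring
  exact lt_of_strictMonoOn_of_strictAntiOn (strictMonoOn_logGap hc hcd hsum hturn)
    (strictAntiOn_logGap hc hcd hsum) hzero.ge hone.ge ht

lemma one_add_mul_lt_exp_mul_one_sub (hc : 0 < c) (hcd : c < d) (hsum : c + d = 1)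
    (hturn : d - c < c * d) (hend : 1 + d = exp 1 * (1 - c)) {t : ℝ} (ht : t ∈ Ioo 0 1) :
    1 + d * t < exp t * (1 - c * t) := by
  obtain ⟨hct, hdt⟩ :=
    one_sub_mul_pos_and_one_add_mul_pos hc hcd hsum (Ioo_subset_Icc_self ht)
  have hpos := logGap_pos hc hcd hsum hturn hend ht
  rw [logGap] at hpos
  rw [← exp_log hdt, ← exp_log hct, ← exp_add, exp_lt_exp]
  linarith

end LogGap

lemma one_add_mul_lt_exp_mul_one_sub_of_mul_eq {c t : ℝ} (hc : c * (exp 1 - 1) = exp 1 - 2)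
    (ht : t ∈ Ioo 0 1) : 1 + (exp 1 - 1 - c * exp 1) * t < exp t * (1 - c * t) := by
  have he₀ := exp_one_gt_d9
  have he₁ := exp_one_lt_d9
  norm_num at he₀ he₁
  have hc₀ : 0 < c := by nlinarith
  have hc₁ : c < 1 / 2 := by nlinarith
  -- `c² - 3c + 1 < 0` amounts to `e² - 3e + 1 > 0`, i.e. `e > (3 + √5) / 2 ≈ 2.618`
  have hturn : c ^ 2 - 3 * c + 1 < 0 := by nlinarith
  exact one_add_mul_lt_exp_mul_one_sub hc₀ (by linarith) (by linarith) (by nlinarith) (by ring) ht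

theorem z1_mul_Y_lt_x
    (y x : ℝ) (hy : 1 < y) (hx : x ∈ Set.Ioo (0:ℝ) 1)
    (heq : x - Real.log x = y - Real.log y) :
    let Y := y * Real.exp (-y)
    let c₁ := (Real.exp 1 - 2) / (Real.exp 1 - 1)
    let d₁ := Real.exp 1 - 1 - c₁ * Real.exp 1
    ((1 - d₁ * Y - Real.sqrt ((1 - d₁ * Y)^2 - 4 * c₁ * Y)) / (2 * c₁ * Y)) * Y < x := by
  intro Y c₁ d₁
  have he : 2 < exp 1 := by linarith [exp_one_gt_d9]
  have hc₁ : 0 < c₁ := div_pos (by linarith) (by linarith)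
  have hYx : Y = x * exp (-x) := (mul_exp_neg_eq_of_sub_log_eq hx.1 (by linarith) heq).symm
  have hY : 0 < Y := hYx ▸ mul_pos hx.1 (exp_pos _)
  have hkey : 1 + d₁ * x < exp x * (1 - c₁ * x) :=
    one_add_mul_lt_exp_mul_one_sub_of_mul_eq (div_mul_cancel₀ _ (by linarith)) hx
  have hquad : c₁ * x ^ 2 - (1 - d₁ * Y) * x + Y < 0 := by
    have hYe : Y * exp x = x := by
      rw [hYx, mul_assoc, ← exp_add, neg_add_cancel, exp_zero, mul_one]
    have := mul_lt_mul_of_pos_left hkey hY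
    rw [← mul_assoc, hYe] at this
    linarith
  rw [div_mul_eq_mul_div, mul_div_mul_right _ _ hY.ne']
  exact sub_sqrt_div_lt_of_quadratic_neg hc₁ hquad
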